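/- arXiv:2508.12747 — 2 statements merged into one kernel-verified Lean document; each statement's English description precedes it below -/
import Mathlib

section
/- In every planar geometric storyplan of the graph G, there is no time step at which all twelve cycle vertices and two distinct apex vertices are simultaneously visible. -/
/-- The straight-line drawing `D` of the subgraph of `G` induced by the visible
vertex set `S` is planar. -/
def IsPlanarSLFrame {V : Type*} (G : SimpleGraph V) (S : Set V) (D : V → ℝ × ℝ) : Prop :=
  Set.InjOn D S ∧
  (∀ u v w, G.Adj u v → u ∈ S → v ∈ S → w ∈ S → w ≠ u → w ≠ v →
      D w ∉ openSegment ℝ (D u) (D v)) ∧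
  (∀ u v x y, G.Adj u v → G.Adj x y → u ∈ S → v ∈ S → x ∈ S → y ∈ S →
      ¬((u = x ∧ v = y) ∨ (u = y ∧ v = x)) →
      ∀ p ∈ segment ℝ (D u) (D v) ∩ segment ℝ (D x) (D y),
        ∃ z, (z = u ∨ z = v) ∧ (z = x ∨ z = y) ∧ p = D z)

/-- `(len, s, e, D)` is a planar geometric storyplan of `G`: `len ≥ 1` time steps,
each vertex `v` is visible on the nonempty interval `[s v, e v] ⊆ [1, len]`,
the endpoints of every edge co-occur, and every frame is a planar
straight-line drawing. -/
def IsGeomStoryplan {V : Type*} (G : SimpleGraph V)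
    (len : ℕ) (s e : V → ℕ) (D : V → ℝ × ℝ) : Prop :=
  1 ≤ len ∧
  (∀ v, 1 ≤ s v ∧ s v ≤ e v ∧ e v ≤ len) ∧
  (∀ u v, G.Adj u v → ∃ t, s u ≤ t ∧ t ≤ e u ∧ s v ≤ t ∧ t ≤ e v) ∧
  (∀ t, 1 ≤ t → t ≤ len → IsPlanarSLFrame G {v | s v ≤ t ∧ t ≤ e v} D)

/-- `G` admits a planar geometric storyplan. -/
def HasGeomStoryplan {V : Type*} (G : SimpleGraph V) : Prop :=
  ∃ len s e D, IsGeomStoryplan G len s e D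

/-- The 28 vertices of the graph `G`: cycle vertices `a i`, `b i`, `c i`
(`i ∈ Fin 4`), apex vertices `q i j` and edge vertices `r i j`
(`i ∈ Fin 4`, `j ∈ Fin 2`). -/
inductive GVert : Type
  | a : Fin 4 → GVert
  | b : Fin 4 → GVert
  | c : Fin 4 → GVert
  | q : Fin 4 → Fin 2 → GVert
  | r : Fin 4 → Fin 2 → GVert
  deriving DecidableEq

/-- Base relation generating the edges of `G`: the three 4-cycles
`A`, `B`, `C`; each apex vertex `q i j` adjacent to all twelve cycle vertices;
each edge vertex `r i j` adjacent to `q i j` and to the six cycle vertices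
`a i, a (i+1), b i, b (i+1), c i, c (i+1)`. -/
def GRel : GVert → GVert → Prop
  | .a i, .a k => k = i + 1
  | .b i, .b k => k = i + 1
  | .c i, .c k => k = i + 1
  | .q _ _, .a _ => True
  | .q _ _, .b _ => True
  | .q _ _, .c _ => True
  | .r i j, .q i' j' => i' = i ∧ j' = j
  | .r i _, .a k => k = i ∨ k = i + 1
  | .r i _, .b k => k = i ∨ k = i + 1
  | .r i _, .c k => k = i ∨ k = i + 1
  | _, _ => False

/-- The graph `G` from the paper (28 vertices). -/
def GraphG : SimpleGraph GVert := SimpleGraph.fromRel GRel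

/-- Vertex `v` is visible at time `t`. -/
def Visible (s e : GVert → ℕ) (t : ℕ) (v : GVert) : Prop :=
  s v ≤ t ∧ t ≤ e v

/-- All twelve cycle vertices are visible at time `t`. -/
def CyclesVisible (s e : GVert → ℕ) (t : ℕ) : Prop :=
  ∀ k : Fin 4, Visible s e t (.a k) ∧ Visible s e t (.b k) ∧ Visible s e t (.c k)

/-!
Only the apexes `q, q'`, the cycle `A = a₀a₁a₂a₃` and `b₀` are needed. In a planar straight-line
drawing every triangle `q aᵢ aᵢ₊₁` or `q' aⱼ aⱼ₊₁` contains either all or none of the remaining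
ones of these seven vertices, since they are joined to one another through the other apex by edges
that avoid the triangle. Two different triangles cannot both contain everything, as a vertex of a
triangle is one of its extreme points, and two empty ones have disjoint interiors. Hence all
triangles at one apex, say `q'`, are empty, and some point lies in exactly one triangle at `q` and
in none at `q'`: `b₀` if a triangle at `q` is full, the centroid of `q a₀ a₁` otherwise. This
contradicts parity: for a point off the drawing, the numbers of triangles at `q` and at `q'`
containing it are both congruent mod 2 to the number of crossings of a generic ray from it with
the cycle `A`.
-/

open Set

namespace PlaneGeometry

/-- Twice the signed area of the triangle `p a b`; positive iff `p a b` is counterclockwise. -/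
def orient (p a b : ℝ × ℝ) : ℝ := (a.1 - p.1) * (b.2 - p.2) - (a.2 - p.2) * (b.1 - p.1)

variable {p a b x y : ℝ × ℝ}

lemma orient_rotate (p a b : ℝ × ℝ) : orient a b p = orient p a b := by unfold orient; ring

@[simp] lemma orient_self_left (p a : ℝ × ℝ) : orient p a p = 0 := by unfold orient; ring

@[simp] lemma orient_self_right (p a : ℝ × ℝ) : orient p a a = 0 := by unfold orient; ring

lemma orient_add_orient_add_orient (p a b x : ℝ × ℝ) :
    orient p a x + orient a b x + orient b p x = orient p a b := by unfold orient; ring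

lemma orient_smul_eq (p a b x : ℝ × ℝ) :
    orient p a b • x = orient a b x • p + orient b p x • a + orient p a x • b := by
  ext <;> simp only [orient, Prod.fst_add, Prod.snd_add, Prod.smul_fst, Prod.smul_snd,
    smul_eq_mul] <;> ring

lemma orient_smul_add_smul (p a x y : ℝ × ℝ) {s t : ℝ} (hst : s + t = 1) :
    orient p a (s • x + t • y) = s * orient p a x + t * orient p a y := by
  obtain rfl : t = 1 - s := by linarith
  simp only [orient, Prod.fst_add, Prod.snd_add, Prod.smul_fst, Prod.smul_snd, smul_eq_mul]
  ring

lemma continuous_orient (p a : ℝ × ℝ) : Continuous (orient p a) := by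
  unfold orient; fun_prop

lemma orient_eq_zero_of_mem_segment (h : x ∈ segment ℝ p a) : orient p a x = 0 := by
  obtain ⟨s, t, -, -, hst, rfl⟩ := h
  simp [orient_smul_add_smul p a p a hst]

lemma exists_eq_lineMap_of_orient_eq_zero (hpa : p ≠ a) (h : orient p a b = 0) :
    ∃ c : ℝ, b = AffineMap.lineMap p a c := by
  simp only [AffineMap.lineMap_apply_module, Prod.ext_iff, Prod.fst_add, Prod.snd_add,
    Prod.smul_fst, Prod.smul_snd, smul_eq_mul]
  unfold orient at h
  by_cases h₁ : a.1 = p.1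
  · have h₂ : a.2 - p.2 ≠ 0 := fun h₂ => hpa (Prod.ext h₁.symm (by linarith))
    have hb : b.1 = p.1 := by
      rw [h₁, sub_self, zero_mul, zero_sub, neg_eq_zero] at h
      linarith [(mul_eq_zero.mp h).resolve_left h₂]
    refine ⟨(b.2 - p.2) / (a.2 - p.2), ?_, ?_⟩
    · rw [hb, h₁]; ring
    · field_simp; ring
  · have h₁' : a.1 - p.1 ≠ 0 := sub_ne_zero.mpr h₁
    refine ⟨(b.1 - p.1) / (a.1 - p.1), ?_, ?_⟩
    · field_simp; ring
    · field_simp; linear_combination h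

lemma collinear_of_orient_eq_zero (h : orient p a b = 0) : Collinear ℝ {p, a, b} := by
  by_cases hpa : p = a
  · subst hpa; simp [collinear_pair]
  obtain ⟨c, rfl⟩ := exists_eq_lineMap_of_orient_eq_zero hpa h
  convert collinear_insert_of_mem_affineSpan_pair (k := ℝ)
    (AffineMap.lineMap_mem_affineSpan_pair c p a) using 1
  ext; simp only [mem_insert_iff, mem_singleton_iff]; tauto

/-- `orient p a x`, `orient a b x`, `orient b p x` are `orient p a b` times the barycentric
coordinates of `x` with respect to `b`, `p`, `a`. -/
def openTriangle (p a b : ℝ × ℝ) : Set (ℝ × ℝ) :=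
  {x | 0 < orient p a x * orient p a b ∧ 0 < orient a b x * orient p a b ∧
    0 < orient b p x * orient p a b}

def triangle (p a b : ℝ × ℝ) : Set (ℝ × ℝ) :=
  {x | 0 ≤ orient p a x * orient p a b ∧ 0 ≤ orient a b x * orient p a b ∧
    0 ≤ orient b p x * orient p a b}

lemma openTriangle_rotate (p a b : ℝ × ℝ) : openTriangle a b p = openTriangle p a b := by
  ext x; simp only [openTriangle, mem_ofPred_eq, orient_rotate]; tauto

lemma triangle_rotate (p a b : ℝ × ℝ) : triangle a b p = triangle p a b := by
  ext x; simp only [triangle, mem_ofPred_eq, orient_rotate]; tauto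

lemma mem_openTriangle_iff :
    x ∈ openTriangle p a b ↔ (0 < orient p a x ∧ 0 < orient a b x ∧ 0 < orient b p x) ∨
      (orient p a x < 0 ∧ orient a b x < 0 ∧ orient b p x < 0) := by
  have hsum := orient_add_orient_add_orient p a b x
  constructor
  · rintro ⟨h₁, h₂, h₃⟩
    rcases (right_ne_zero_of_mul h₁.ne').lt_or_gt with h | h
    · exact Or.inr ⟨neg_of_mul_pos_left h₁ h.le, neg_of_mul_pos_left h₂ h.le,
        neg_of_mul_pos_left h₃ h.le⟩
    · exact Or.inl ⟨pos_of_mul_pos_left h₁ h.le, pos_of_mul_pos_left h₂ h.le,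
        pos_of_mul_pos_left h₃ h.le⟩
  · rintro (⟨h₁, h₂, h₃⟩ | ⟨h₁, h₂, h₃⟩)
    · have : 0 < orient p a b := by linarith
      exact ⟨mul_pos h₁ this, mul_pos h₂ this, mul_pos h₃ this⟩
    · have : orient p a b < 0 := by linarith
      exact ⟨mul_pos_of_neg_of_neg h₁ this, mul_pos_of_neg_of_neg h₂ this,
        mul_pos_of_neg_of_neg h₃ this⟩

lemma openTriangle_subset_triangle : openTriangle p a b ⊆ triangle p a b :=
  fun _ ⟨h₁, h₂, h₃⟩ => ⟨h₁.le, h₂.le, h₃.le⟩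

lemma left_mem_triangle (p a b : ℝ × ℝ) : p ∈ triangle p a b := by
  refine ⟨by simp, ?_, by simp⟩
  rw [orient_rotate]; exact mul_self_nonneg _

lemma mem_triangle_of_mem (hx : x ∈ ({p, a, b} : Set (ℝ × ℝ))) : x ∈ triangle p a b := by
  rcases hx with rfl | rfl | rfl
  · exact left_mem_triangle x a b
  · rw [← triangle_rotate]; exact left_mem_triangle x b p
  · rw [← triangle_rotate, ← triangle_rotate]; exact left_mem_triangle x p a

lemma disjoint_segment_openTriangle (p a b : ℝ × ℝ) :
    Disjoint (segment ℝ p a) (openTriangle p a b) :=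
  disjoint_left.mpr fun _ hx hx' => by simpa [orient_eq_zero_of_mem_segment hx] using hx'.1

lemma disjoint_segment_openTriangle_of_mem (hx : x ∈ ({p, a, b} : Set (ℝ × ℝ)))
    (hy : y ∈ ({p, a, b} : Set (ℝ × ℝ))) : Disjoint (segment ℝ x y) (openTriangle p a b) := by
  have hpa := disjoint_segment_openTriangle p a b
  have hab : Disjoint (segment ℝ a b) (openTriangle p a b) := by
    rw [← openTriangle_rotate]; exact disjoint_segment_openTriangle a b p
  have hbp : Disjoint (segment ℝ b p) (openTriangle p a b) := by
    rw [← openTriangle_rotate, ← openTriangle_rotate]; exact disjoint_segment_openTriangle b p a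
  rcases hx with rfl | rfl | rfl <;> rcases hy with rfl | rfl | rfl <;>
    first
    | exact hpa | exact hab | exact hbp
    | (rw [segment_symm]; first | exact hpa | exact hab | exact hbp)
    | (rw [segment_same]; first
        | exact hpa.mono_left (singleton_subset_iff.mpr (left_mem_segment ℝ _ _))
        | exact hab.mono_left (singleton_subset_iff.mpr (left_mem_segment ℝ _ _))
        | exact hbp.mono_left (singleton_subset_iff.mpr (left_mem_segment ℝ _ _)))

lemma isOpen_openTriangle (p a b : ℝ × ℝ) : IsOpen (openTriangle p a b) := by
  have h : ∀ u v : ℝ × ℝ, IsOpen {x | 0 < orient u v x * orient p a b} := fun u v =>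
    isOpen_lt continuous_const ((continuous_orient u v).mul continuous_const)
  exact (h p a).inter ((h a b).inter (h b p))

lemma isClosed_triangle (p a b : ℝ × ℝ) : IsClosed (triangle p a b) := by
  have h : ∀ u v : ℝ × ℝ, IsClosed {x | 0 ≤ orient u v x * orient p a b} := fun u v =>
    isClosed_le continuous_const ((continuous_orient u v).mul continuous_const)
  exact (h p a).inter ((h a b).inter (h b p))

lemma openSegment_subset_openTriangle (hx : x ∈ openTriangle p a b) (hy : y ∈ triangle p a b) :
    openSegment ℝ x y ⊆ openTriangle p a b := by
  rintro _ ⟨s, t, hs, ht, hst, rfl⟩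
  simp only [openTriangle, mem_ofPred_eq, orient_smul_add_smul _ _ x y hst, add_mul, mul_assoc]
  exact ⟨add_pos_of_pos_of_nonneg (mul_pos hs hx.1) (mul_nonneg ht.le hy.1),
    add_pos_of_pos_of_nonneg (mul_pos hs hx.2.1) (mul_nonneg ht.le hy.2.1),
    add_pos_of_pos_of_nonneg (mul_pos hs hx.2.2) (mul_nonneg ht.le hy.2.2)⟩

lemma convex_openTriangle (p a b : ℝ × ℝ) : Convex ℝ (openTriangle p a b) :=
  convex_iff_openSegment_subset.mpr fun _ hx _ hy =>
    openSegment_subset_openTriangle hx (openTriangle_subset_triangle hy)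

lemma convex_triangle (p a b : ℝ × ℝ) : Convex ℝ (triangle p a b) := by
  intro x hx y hy s t hs ht hst
  simp only [triangle, mem_ofPred_eq, orient_smul_add_smul _ _ x y hst, add_mul, mul_assoc]
  exact ⟨add_nonneg (mul_nonneg hs hx.1) (mul_nonneg ht hy.1),
    add_nonneg (mul_nonneg hs hx.2.1) (mul_nonneg ht hy.2.1),
    add_nonneg (mul_nonneg hs hx.2.2) (mul_nonneg ht hy.2.2)⟩

lemma centroid_mem_openTriangle (hΔ : orient p a b ≠ 0) :
    (3 : ℝ)⁻¹ • (p + a + b) ∈ openTriangle p a b := by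
  have h : ∀ u v w : ℝ × ℝ, orient u v ((3 : ℝ)⁻¹ • (u + v + w)) = orient u v w / 3 := by
    intro u v w
    simp only [orient, Prod.smul_fst, Prod.smul_snd, Prod.fst_add, Prod.snd_add, smul_eq_mul]
    ring
  have hpos : 0 < orient p a b / 3 * orient p a b := by
    rw [div_mul_eq_mul_div]; exact div_pos (mul_self_pos.mpr hΔ) three_pos
  refine ⟨by rwa [h], ?_, ?_⟩
  · rw [show p + a + b = a + b + p by abel, h, orient_rotate]; exact hpos
  · rw [show p + a + b = b + p + a by abel, h, ← orient_rotate b p a]; exact hpos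

lemma triangle_subset_closure_openTriangle (hΔ : orient p a b ≠ 0) :
    triangle p a b ⊆ closure (openTriangle p a b) := fun y hy =>
  closure_mono (openSegment_subset_openTriangle (centroid_mem_openTriangle hΔ) hy)
    (segment_subset_closure_openSegment (right_mem_segment ℝ _ y))

lemma div_nonneg_of_mul_nonneg {u v : ℝ} (h : 0 ≤ u * v) : 0 ≤ u / v :=
  div_nonneg_iff.mpr (mul_nonneg_iff.mp h)

lemma barycentric_combination_eq (hΔ : orient p a b ≠ 0) :
    (orient a b x / orient p a b) • p + (orient b p x / orient p a b) • a +
      (orient p a x / orient p a b) • b = x := by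
  apply smul_right_injective _ hΔ
  simp only [smul_add, smul_smul, mul_div_cancel₀ _ hΔ]
  exact (orient_smul_eq p a b x).symm

lemma eq_of_orient_eq_zero (hΔ : orient p a b ≠ 0) (h₁ : orient p a x = 0)
    (h₂ : orient b p x = 0) : x = p := by
  have hsum := orient_add_orient_add_orient p a b x
  rw [h₁, h₂, zero_add, add_zero] at hsum
  simpa [hsum, h₁, h₂, div_self hΔ] using (barycentric_combination_eq (x := x) hΔ).symm

lemma mem_segment_of_mem_triangle (hΔ : orient p a b ≠ 0) (hx : x ∈ triangle p a b)
    (h₀ : orient p a x = 0) : x ∈ segment ℝ p a := by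
  refine ⟨orient a b x / orient p a b, orient b p x / orient p a b,
    div_nonneg_of_mul_nonneg hx.2.1, div_nonneg_of_mul_nonneg hx.2.2, ?_, ?_⟩
  · field_simp; linear_combination orient_add_orient_add_orient p a b x - h₀
  · simpa [h₀] using barycentric_combination_eq (x := x) hΔ

lemma mem_openTriangle_of_mem_triangle (hΔ : orient p a b ≠ 0) (hx : x ∈ triangle p a b)
    (hpa : x ∉ segment ℝ p a) (hab : x ∉ segment ℝ a b) (hbp : x ∉ segment ℝ b p) :
    x ∈ openTriangle p a b := by
  have hΔ' : orient a b p ≠ 0 := by rwa [orient_rotate]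
  have hΔ'' : orient b p a ≠ 0 := by rwa [orient_rotate, orient_rotate]
  have hx' : x ∈ triangle a b p := by rwa [triangle_rotate]
  have hx'' : x ∈ triangle b p a := by rwa [triangle_rotate, triangle_rotate]
  refine ⟨hx.1.lt_of_ne fun h => hpa ?_, hx.2.1.lt_of_ne fun h => hab ?_,
    hx.2.2.lt_of_ne fun h => hbp ?_⟩
  · exact mem_segment_of_mem_triangle hΔ hx ((mul_eq_zero.mp h.symm).resolve_right hΔ)
  · exact mem_segment_of_mem_triangle hΔ' hx' ((mul_eq_zero.mp h.symm).resolve_right hΔ)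
  · exact mem_segment_of_mem_triangle hΔ'' hx'' ((mul_eq_zero.mp h.symm).resolve_right hΔ)

lemma triangle_subset_convexHull (hΔ : orient p a b ≠ 0) :
    triangle p a b ⊆ convexHull ℝ {p, a, b} := by
  intro x hx
  have hvert := subset_convexHull ℝ ({p, a, b} : Set (ℝ × ℝ))
  simp only [insert_subset_iff, singleton_subset_iff] at hvert
  convert (convex_convexHull ℝ ({p, a, b} : Set (ℝ × ℝ))).sum_mem (t := Finset.univ)
    (w := ![orient a b x / orient p a b, orient b p x / orient p a b,
      orient p a x / orient p a b]) (z := ![p, a, b])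
    (by simp [Fin.forall_fin_succ, div_nonneg_of_mul_nonneg hx.1,
      div_nonneg_of_mul_nonneg hx.2.1, div_nonneg_of_mul_nonneg hx.2.2])
    (by simp only [Fin.sum_univ_three]; simp; field_simp
        linear_combination orient_add_orient_add_orient p a b x)
    (by simpa [Fin.forall_fin_succ] using hvert)
  simp [Fin.sum_univ_three, barycentric_combination_eq hΔ]

lemma left_mem_extremePoints_triangle (hΔ : orient p a b ≠ 0) :
    p ∈ (triangle p a b).extremePoints ℝ := by
  refine mem_extremePoints_iff_left.mpr ⟨left_mem_triangle p a b, ?_⟩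
  rintro y hy z hz ⟨s, t, hs, ht, hst, hp⟩
  -- `orient a b · * orient p a b` is an affine function on the triangle maximised only at `p`.
  have key : ∀ u ∈ triangle p a b, orient a b u * orient p a b ≤ orient p a b * orient p a b ∧
      (orient a b u * orient p a b = orient p a b * orient p a b → u = p) := by
    intro u hu
    have hsum : orient a b u * orient p a b = orient p a b * orient p a b -
        orient p a u * orient p a b - orient b p u * orient p a b := by
      linear_combination orient p a b * orient_add_orient_add_orient p a b u
    refine ⟨by linarith [hu.1, hu.2.2], fun h => eq_of_orient_eq_zero hΔ ?_ ?_⟩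
    · have : orient p a u * orient p a b = 0 := by linarith [hu.1, hu.2.2]
      exact (mul_eq_zero.mp this).resolve_right hΔ
    · have : orient b p u * orient p a b = 0 := by linarith [hu.1, hu.2.2]
      exact (mul_eq_zero.mp this).resolve_right hΔ
  have hval := congrArg (fun u => orient a b u * orient p a b) hp
  simp only [orient_smul_add_smul _ _ y z hst, orient_rotate] at hval
  obtain ⟨hy₁, hy₂⟩ := key y hy
  obtain ⟨hz₁, -⟩ := key z hz
  exact hy₂ (by nlinarith)

lemma eq_or_eq_or_eq_of_mem_triangle {q r w : ℝ × ℝ} (hΔ : orient p a b ≠ 0)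
    (hΔ' : orient q r w ≠ 0) (hq : q ∈ triangle p a b) (hr : r ∈ triangle p a b)
    (hw : w ∈ triangle p a b) (hp : p ∈ triangle q r w) : p = q ∨ p = r ∨ p = w := by
  have hsub : convexHull ℝ {q, r, w} ⊆ triangle p a b :=
    convexHull_min (insert_subset hq (insert_subset hr (singleton_subset_iff.mpr hw)))
      (convex_triangle p a b)
  simpa using extremePoints_convexHull_subset
    (inter_extremePoints_subset_extremePoints_of_subset hsub
      ⟨triangle_subset_convexHull hΔ' hp, left_mem_extremePoints_triangle hΔ⟩)

lemma subset_openTriangle_or_disjoint_triangle {s : Set (ℝ × ℝ)} (hs : IsPreconnected s)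
    (hΔ : orient p a b ≠ 0) (hpa : Disjoint s (segment ℝ p a)) (hab : Disjoint s (segment ℝ a b))
    (hbp : Disjoint s (segment ℝ b p)) :
    s ⊆ openTriangle p a b ∨ Disjoint s (triangle p a b) := by
  have hmem : ∀ x ∈ s, x ∈ triangle p a b → x ∈ openTriangle p a b := fun x hx hxT =>
    mem_openTriangle_of_mem_triangle hΔ hxT (hpa.notMem_of_mem_left hx)
      (hab.notMem_of_mem_left hx) (hbp.notMem_of_mem_left hx)
  by_cases hne : (s ∩ openTriangle p a b).Nonempty
  · refine Or.inl (hs.subset_left_of_subset_union (isOpen_openTriangle p a b)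
      (isClosed_triangle p a b).isOpen_compl
      (disjoint_compl_right.mono_left openTriangle_subset_triangle) (fun x hx => ?_) hne)
    by_cases hxT : x ∈ triangle p a b
    · exact Or.inl (hmem x hx hxT)
    · exact Or.inr hxT
  · exact Or.inr (disjoint_left.mpr fun x hx hxT => hne ⟨x, hx, hmem x hx hxT⟩)

lemma disjoint_openTriangle_of_not_mem_triangle {q r w : ℝ × ℝ} (hΔ : orient p a b ≠ 0)
    (hΔ' : orient q r w ≠ 0) (hq : q ∉ triangle p a b)
    (hpa : Disjoint (openTriangle q r w) (segment ℝ p a))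
    (hab : Disjoint (openTriangle q r w) (segment ℝ a b))
    (hbp : Disjoint (openTriangle q r w) (segment ℝ b p)) :
    Disjoint (openTriangle q r w) (openTriangle p a b) := by
  rcases subset_openTriangle_or_disjoint_triangle (convex_openTriangle q r w).isPreconnected hΔ
    hpa hab hbp with h | h
  · exact absurd ((isClosed_triangle p a b).closure_subset_iff.mpr
      (h.trans openTriangle_subset_triangle)
      (triangle_subset_closure_openTriangle hΔ' (left_mem_triangle q r w))) hq
  · exact h.mono_right openTriangle_subset_triangle

/-- `1` iff the ray from `x` through `y` meets the segment `[u, v]`, provided neither `u` nor `v`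
lies on the line `xy`. -/
noncomputable def rayCrossing (x y u v : ℝ × ℝ) : ZMod 2 :=
  if orient x y u * orient x y v < 0 ∧ 0 < orient x u v * orient x y v then 1 else 0

lemma rayCrossing_comm (x y u v : ℝ × ℝ) : rayCrossing x y u v = rayCrossing x y v u := by
  have h : orient x v u = -orient x u v := by unfold orient; ring
  unfold rayCrossing
  rw [h, mul_comm (orient x y v)]
  congr 1
  refine propext ⟨fun ⟨h₁, h₂⟩ => ⟨h₁, ?_⟩, fun ⟨h₁, h₂⟩ => ⟨h₁, ?_⟩⟩
  · refine pos_of_mul_pos_left (b := orient x y v * orient x y v) ?_ (mul_self_nonneg _)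
    convert mul_pos h₂ (neg_pos.mpr h₁) using 1; ring
  · refine pos_of_mul_pos_left (b := orient x y u * orient x y u) ?_ (mul_self_nonneg _)
    convert mul_pos h₂ (neg_pos.mpr h₁) using 1; ring

lemma mem_segment_of_orient_eq_zero (h₀ : orient p a x = 0)
    (hopp : orient x y p * orient x y a < 0) : x ∈ segment ℝ p a := by
  have hpa : p ≠ a := by rintro rfl; nlinarith
  obtain ⟨c, hc⟩ := exists_eq_lineMap_of_orient_eq_zero hpa h₀
  rw [AffineMap.lineMap_apply_module] at hc
  have hline : (1 - c) * orient x y p + c * orient x y a = 0 := by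
    rw [← orient_smul_add_smul _ _ _ _ (by ring), ← hc, orient_self_left]
  have h₁ : c * (orient x y p * orient x y p - orient x y p * orient x y a) =
      orient x y p * orient x y p := by linear_combination (-orient x y p) * hline
  have h₂ : (1 - c) * (orient x y p * orient x y p - orient x y p * orient x y a) =
      -(orient x y p * orient x y a) := by linear_combination orient x y p * hline
  refine ⟨1 - c, c, ?_, ?_, by ring, hc.symm⟩ <;> nlinarith [mul_self_nonneg (orient x y p)]

lemma sameSign_parity_of_lone {α β γ fp fa fb : ℝ} (hpa : fp * fa < 0) (hbp : fb * fp < 0)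
    (hα : α ≠ 0) (hγ : γ ≠ 0) (hstar : β * fp + γ * fa + α * fb = 0) :
    (if (0 < α ∧ 0 < β ∧ 0 < γ) ∨ (α < 0 ∧ β < 0 ∧ γ < 0) then 1 else 0 : ZMod 2) =
      (if 0 < α * fa then 1 else 0) + (if 0 < γ * fp then 1 else 0) := by
  obtain ⟨hp, ha, hb⟩ | ⟨hp, ha, hb⟩ :
      (0 < fp ∧ fa < 0 ∧ fb < 0) ∨ (fp < 0 ∧ 0 < fa ∧ 0 < fb) := by
    rcases mul_neg_iff.mp hpa with ⟨hp, ha⟩ | ⟨hp, ha⟩ <;>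
      rcases mul_neg_iff.mp hbp with ⟨hb, hp'⟩ | ⟨hb, hp'⟩ <;>
      first | exact Or.inl ⟨hp, ha, hb⟩ | exact Or.inr ⟨hp, ha, hb⟩ | exact absurd hp (by linarith)
  all_goals
    rcases hα.lt_or_gt with hα | hα <;> rcases hγ.lt_or_gt with hγ | hγ <;>
    simp only [mul_pos_iff, hα, hγ, ha, hp, hα.not_gt, hγ.not_gt, ha.not_gt, hp.not_gt,
      true_and, and_true, false_and, and_false, or_false, false_or] <;>
    split_ifs <;> (try simp only [not_lt] at *) <;> first | decide | (exfalso; nlinarith)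

/-- Used with `α β γ := orient p a x, orient a b x, orient b p x` and
`fp fa fb := orient x y p, orient x y a, orient x y b`; `hstar` is the identity relating them. -/
lemma sameSign_parity {α β γ fp fa fb : ℝ} (hp : fp ≠ 0) (ha : fa ≠ 0) (hb : fb ≠ 0)
    (hstar : β * fp + γ * fa + α * fb = 0) (hα : fp * fa < 0 → α ≠ 0)
    (hβ : fa * fb < 0 → β ≠ 0) (hγ : fb * fp < 0 → γ ≠ 0) :
    (if (0 < α ∧ 0 < β ∧ 0 < γ) ∨ (α < 0 ∧ β < 0 ∧ γ < 0) then 1 else 0 : ZMod 2) =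
      (if fp * fa < 0 ∧ 0 < α * fa then 1 else 0) +
        (if fa * fb < 0 ∧ 0 < β * fb then 1 else 0) +
        (if fb * fp < 0 ∧ 0 < γ * fp then 1 else 0) := by
  by_cases hpa : fp * fa < 0 <;> by_cases hab : fa * fb < 0 <;> by_cases hbp : fb * fp < 0 <;>
    simp only [hpa, hab, hbp, true_and, false_and, if_false, add_zero, zero_add] <;>
    (try simp only [not_lt] at hpa hab hbp)
  · nlinarith [mul_neg_of_pos_of_neg (mul_pos_of_neg_of_neg hpa hab) hbp, sq_nonneg (fp * fa * fb)]
  · rw [add_comm]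
    convert sameSign_parity_of_lone (β := γ) hab hpa (hβ hab) (hα hpa) (by linarith) using 2
    tauto
  · exact sameSign_parity_of_lone hpa hbp (hα hpa) (hγ hbp) hstar
  · nlinarith [mul_nonneg hab hbp, mul_neg_of_neg_of_pos hpa (mul_self_pos.mpr hb)]
  · rw [add_comm]
    convert sameSign_parity_of_lone (β := α) hbp hab (hγ hbp) (hβ hab) (by linarith) using 2
    tauto
  · nlinarith [mul_nonneg hpa hbp, mul_neg_of_neg_of_pos hab (mul_self_pos.mpr hp)]
  · nlinarith [mul_nonneg hpa hab, mul_neg_of_neg_of_pos hbp (mul_self_pos.mpr ha)]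
  · rw [if_neg]
    have h := mul_eq_zero_of_left hstar fp
    rintro (⟨h₁, h₂, h₃⟩ | ⟨h₁, h₂, h₃⟩)
    · nlinarith [mul_pos h₂ (mul_self_pos.mpr hp), mul_nonneg h₃.le hpa, mul_nonneg h₁.le hbp]
    · nlinarith [mul_neg_of_neg_of_pos h₂ (mul_self_pos.mpr hp),
        mul_nonpos_of_nonpos_of_nonneg h₃.le hpa, mul_nonpos_of_nonpos_of_nonneg h₁.le hbp]

theorem indicator_openTriangle_eq_sum_rayCrossing (hp : orient x y p ≠ 0)
    (ha : orient x y a ≠ 0) (hb : orient x y b ≠ 0) (hpa : x ∉ segment ℝ p a)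
    (hab : x ∉ segment ℝ a b) (hbp : x ∉ segment ℝ b p) :
    (openTriangle p a b).indicator 1 x =
      rayCrossing x y p a + rayCrossing x y a b + rayCrossing x y b p := by
  classical
  have hstar : orient a b x * orient x y p + orient b p x * orient x y a +
      orient p a x * orient x y b = 0 := by unfold orient; ring
  simp only [rayCrossing, ← orient_rotate x p a, ← orient_rotate x a b, ← orient_rotate x b p,
    indicator_apply, mem_openTriangle_iff, Pi.one_apply]
  exact sameSign_parity hp ha hb hstar
    (fun h h₀ => hpa (mem_segment_of_orient_eq_zero h₀ h))
    (fun h h₀ => hab (mem_segment_of_orient_eq_zero h₀ h))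
    (fun h h₀ => hbp (mem_segment_of_orient_eq_zero h₀ h))

/-- Summed over the triangles `h Aᵢ Aᵢ₊₁` of a wheel, each spoke is crossed twice. -/
theorem sum_indicator_openTriangle_eq_sum_rayCrossing {n : ℕ} [NeZero n] {h : ℝ × ℝ}
    {A : Fin n → ℝ × ℝ} (hh : orient x y h ≠ 0) (hA : ∀ i, orient x y (A i) ≠ 0)
    (hspoke : ∀ i, x ∉ segment ℝ h (A i)) (hrim : ∀ i, x ∉ segment ℝ (A i) (A (i + 1))) :
    ∑ i, (openTriangle h (A i) (A (i + 1))).indicator (1 : ℝ × ℝ → ZMod 2) x =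
      ∑ i, rayCrossing x y (A i) (A (i + 1)) := by
  have hshift : ∑ i, rayCrossing x y h (A (i + 1)) = ∑ i, rayCrossing x y h (A i) :=
    Fintype.sum_equiv (Equiv.addRight 1) _ _ fun _ => rfl
  simp_rw [indicator_openTriangle_eq_sum_rayCrossing hh (hA _) (hA _) (hspoke _) (hrim _)
    (segment_symm ℝ h _ ▸ hspoke _), rayCrossing_comm x y _ h, Finset.sum_add_distrib, hshift]
  rw [add_comm, ← add_assoc, CharTwo.add_self_eq_zero, zero_add]

lemma exists_orient_ne_zero (x : ℝ × ℝ) {s : Set (ℝ × ℝ)} (hs : s.Finite) (hx : x ∉ s) :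
    ∃ y, ∀ v ∈ s, orient x y v ≠ 0 := by
  obtain ⟨t, ht⟩ := Infinite.exists_notMem_finset
    (hs.toFinset.image fun v => (v.2 - x.2) / (v.1 - x.1))
  refine ⟨x + (1, t), fun v hv h₀ => ?_⟩
  simp only [orient, Prod.fst_add, Prod.snd_add, add_sub_cancel_left, one_mul] at h₀
  by_cases h : v.1 = x.1
  · rw [h, sub_self, mul_zero, sub_zero, sub_eq_zero] at h₀
    exact hx (Prod.ext h.symm h₀.symm ▸ hv)
  · refine ht (Finset.mem_image.mpr ⟨v, hs.mem_toFinset.mpr hv, ?_⟩)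
    rw [div_eq_iff (sub_ne_zero.mpr h)]
    linarith

theorem sum_indicator_openTriangle_eq_of_common_rim {n : ℕ} [NeZero n] {h₁ h₂ : ℝ × ℝ}
    {A : Fin n → ℝ × ℝ} (hspoke₁ : ∀ i, x ∉ segment ℝ h₁ (A i))
    (hspoke₂ : ∀ i, x ∉ segment ℝ h₂ (A i)) (hrim : ∀ i, x ∉ segment ℝ (A i) (A (i + 1))) :
    ∑ i, (openTriangle h₁ (A i) (A (i + 1))).indicator (1 : ℝ × ℝ → ZMod 2) x =
      ∑ i, (openTriangle h₂ (A i) (A (i + 1))).indicator (1 : ℝ × ℝ → ZMod 2) x := by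
  obtain ⟨y, hy⟩ := exists_orient_ne_zero x (((finite_range A).insert h₂).insert h₁) (by
    rintro (rfl | rfl | ⟨i, rfl⟩)
    · exact hspoke₁ 0 (left_mem_segment ℝ _ _)
    · exact hspoke₂ 0 (left_mem_segment ℝ _ _)
    · exact hspoke₁ i (right_mem_segment ℝ _ _))
  rw [sum_indicator_openTriangle_eq_sum_rayCrossing (hy h₁ (by simp)) (fun i => hy _ (by simp))
      hspoke₁ hrim,
    sum_indicator_openTriangle_eq_sum_rayCrossing (hy h₂ (by simp)) (fun i => hy _ (by simp))
      hspoke₂ hrim]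

end PlaneGeometry

open PlaneGeometry

section Triangles

variable {V : Type*}

structure IsTriangleIn (G : SimpleGraph V) (S : Set V) (u v w : V) : Prop where
  adj₁₂ : G.Adj u v
  adj₂₃ : G.Adj v w
  adj₃₁ : G.Adj w u
  mem₁ : u ∈ S
  mem₂ : v ∈ S
  mem₃ : w ∈ S

def IsEmptyTriangle (S : Set V) (D : V → ℝ × ℝ) (u v w : V) : Prop :=
  ∀ x ∈ S, x ∉ ({u, v, w} : Set V) → D x ∉ openTriangle (D u) (D v) (D w)

def IsFullTriangle (S : Set V) (D : V → ℝ × ℝ) (u v w : V) : Prop :=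
  ∀ x ∈ S, x ∉ ({u, v, w} : Set V) → D x ∈ openTriangle (D u) (D v) (D w)

variable {G : SimpleGraph V} {S : Set V} {D : V → ℝ × ℝ} {u v w x : V}

lemma IsTriangleIn.rotate (h : IsTriangleIn G S u v w) : IsTriangleIn G S v w u :=
  ⟨h.adj₂₃, h.adj₃₁, h.adj₁₂, h.mem₂, h.mem₃, h.mem₁⟩

lemma IsEmptyTriangle.rotate (hE : IsEmptyTriangle S D u v w) : IsEmptyTriangle S D v w u := by
  intro x hx hx'
  rw [openTriangle_rotate]
  exact hE x hx (by simp_all [or_comm, or_left_comm])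

lemma IsFullTriangle.rotate (hF : IsFullTriangle S D u v w) : IsFullTriangle S D v w u := by
  intro x hx hx'
  rw [openTriangle_rotate]
  exact hF x hx (by simp_all [or_comm, or_left_comm])

lemma apply_mem_of_mem_triple (hx : x ∈ ({u, v, w} : Set V)) :
    D x ∈ ({D u, D v, D w} : Set (ℝ × ℝ)) := by
  rcases hx with rfl | rfl | rfl <;> simp

lemma IsEmptyTriangle.apply_not_mem (hE : IsEmptyTriangle S D u v w) (hx : x ∈ S) :
    D x ∉ openTriangle (D u) (D v) (D w) := by
  by_cases hx' : x ∈ ({u, v, w} : Set V)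
  · have h := disjoint_segment_openTriangle_of_mem (apply_mem_of_mem_triple (D := D) hx')
      (apply_mem_of_mem_triple hx')
    rw [segment_same] at h
    exact disjoint_singleton_left.mp h
  · exact hE x hx hx'

lemma IsFullTriangle.apply_mem_triangle (hF : IsFullTriangle S D u v w) (hx : x ∈ S) :
    D x ∈ triangle (D u) (D v) (D w) := by
  by_cases hx' : x ∈ ({u, v, w} : Set V)
  · exact mem_triangle_of_mem (apply_mem_of_mem_triple hx')
  · exact openTriangle_subset_triangle (hF x hx hx')

end Triangles

namespace IsPlanarSLFrame

variable {V : Type*} {G : SimpleGraph V} {S : Set V} {D : V → ℝ × ℝ} {u v w x y : V}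

lemma mono {S' : Set V} (hP : IsPlanarSLFrame G S D) (h : S' ⊆ S) : IsPlanarSLFrame G S' D :=
  ⟨hP.1.mono h, fun u v w huv hu hv hw => hP.2.1 u v w huv (h hu) (h hv) (h hw),
    fun u v x y huv hxy hu hv hx hy => hP.2.2 u v x y huv hxy (h hu) (h hv) (h hx) (h hy)⟩

lemma not_mem_segment (hP : IsPlanarSLFrame G S D) (huv : G.Adj u v) (hu : u ∈ S) (hv : v ∈ S)
    (hw : w ∈ S) (hwu : w ≠ u) (hwv : w ≠ v) : D w ∉ segment ℝ (D u) (D v) := by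
  rw [← insert_endpoints_openSegment]
  rintro (h | h | h)
  · exact hwu (hP.1 hw hu h)
  · exact hwv (hP.1 hw hv h)
  · exact hP.2.1 u v w huv hu hv hw hwu hwv h

lemma disjoint_segment (hP : IsPlanarSLFrame G S D) (huv : G.Adj u v) (hxy : G.Adj x y)
    (hu : u ∈ S) (hv : v ∈ S) (hx : x ∈ S) (hy : y ∈ S)
    (h : Disjoint ({u, v} : Set V) {x, y}) :
    Disjoint (segment ℝ (D u) (D v)) (segment ℝ (D x) (D y)) := by
  refine disjoint_left.mpr fun z hz hz' => ?_
  obtain ⟨c, hc, hc', -⟩ := hP.2.2 u v x y huv hxy hu hv hx hy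
    (by rintro (⟨rfl, -⟩ | ⟨rfl, -⟩) <;> simp at h) z ⟨hz, hz'⟩
  exact disjoint_left.mp h hc hc'

lemma disjoint_openSegment_segment (hP : IsPlanarSLFrame G S D) (hxy : G.Adj x y)
    (huv : G.Adj u v) (hx : x ∈ S) (hy : y ∈ S) (hu : u ∈ S) (hv : v ∈ S)
    (hne : ¬((x = u ∧ y = v) ∨ (x = v ∧ y = u))) :
    Disjoint (openSegment ℝ (D x) (D y)) (segment ℝ (D u) (D v)) := by
  refine disjoint_left.mpr fun z hz hz' => ?_
  have hD : D x ≠ D y := fun h => hxy.ne (hP.1 hx hy h)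
  obtain ⟨c, hc | hc, -, rfl⟩ := hP.2.2 x y u v hxy huv hx hy hu hv hne z
    ⟨openSegment_subset_segment ℝ _ _ hz, hz'⟩ <;> subst hc
  · exact hD (left_mem_openSegment_iff.mp hz)
  · exact hD (right_mem_openSegment_iff.mp hz)

lemma orient_ne_zero (hP : IsPlanarSLFrame G S D) (ht : IsTriangleIn G S u v w) :
    orient (D u) (D v) (D w) ≠ 0 := by
  obtain ⟨huv, hvw, hwu, hu, hv, hw⟩ := ht
  intro h
  rcases (collinear_of_orient_eq_zero h).wbtw_or_wbtw_or_wbtw with h | h | h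
  · exact hP.not_mem_segment hwu hw hu hv hvw.ne huv.ne' (segment_symm ℝ (D w) _ ▸ h.mem_segment)
  · exact hP.not_mem_segment huv hu hv hw hwu.ne hvw.ne' (segment_symm ℝ (D u) _ ▸ h.mem_segment)
  · exact hP.not_mem_segment hvw hv hw hu huv.ne hwu.ne' (segment_symm ℝ (D v) _ ▸ h.mem_segment)

lemma mem_openTriangle_iff_mem_triangle (hP : IsPlanarSLFrame G S D)
    (ht : IsTriangleIn G S u v w) (hx : x ∈ S) (hx' : x ∉ ({u, v, w} : Set V)) :
    D x ∈ openTriangle (D u) (D v) (D w) ↔ D x ∈ triangle (D u) (D v) (D w) := by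
  simp only [mem_insert_iff, mem_singleton_iff, not_or] at hx'
  exact ⟨fun h => openTriangle_subset_triangle h, fun h => mem_openTriangle_of_mem_triangle
    (hP.orient_ne_zero ht) h
    (hP.not_mem_segment ht.adj₁₂ ht.mem₁ ht.mem₂ hx hx'.1 hx'.2.1)
    (hP.not_mem_segment ht.adj₂₃ ht.mem₂ ht.mem₃ hx hx'.2.1 hx'.2.2)
    (hP.not_mem_segment ht.adj₃₁ ht.mem₃ ht.mem₁ hx hx'.2.2 hx'.1)⟩

lemma mem_openTriangle_iff_of_adj (hP : IsPlanarSLFrame G S D) (ht : IsTriangleIn G S u v w)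
    (hxy : G.Adj x y) (hx : x ∈ S) (hy : y ∈ S) (hx' : x ∉ ({u, v, w} : Set V))
    (hy' : y ∉ ({u, v, w} : Set V)) :
    D x ∈ openTriangle (D u) (D v) (D w) ↔ D y ∈ openTriangle (D u) (D v) (D w) := by
  have hdisj : ∀ {c d : V}, G.Adj c d → c ∈ S → d ∈ S → c ∈ ({u, v, w} : Set V) →
      d ∈ ({u, v, w} : Set V) → Disjoint (segment ℝ (D x) (D y)) (segment ℝ (D c) (D d)) := by
    intro c d hcd hc hd hc' hd'
    refine hP.disjoint_segment hxy hcd hx hy hc hd (disjoint_left.mpr ?_)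
    rintro z (rfl | rfl) (rfl | rfl) <;> simp_all
  rcases subset_openTriangle_or_disjoint_triangle (convex_segment _ _).isPreconnected
    (hP.orient_ne_zero ht) (hdisj ht.adj₁₂ ht.mem₁ ht.mem₂ (by simp) (by simp))
    (hdisj ht.adj₂₃ ht.mem₂ ht.mem₃ (by simp) (by simp))
    (hdisj ht.adj₃₁ ht.mem₃ ht.mem₁ (by simp) (by simp)) with h | h
  · exact iff_of_true (h (left_mem_segment ℝ _ _)) (h (right_mem_segment ℝ _ _))
  · exact iff_of_false
      (fun h' => disjoint_left.mp h (left_mem_segment ℝ _ _) (openTriangle_subset_triangle h'))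
      (fun h' => disjoint_left.mp h (right_mem_segment ℝ _ _) (openTriangle_subset_triangle h'))

lemma isFullTriangle_or_isEmptyTriangle (hP : IsPlanarSLFrame G S D)
    (ht : IsTriangleIn G S u v w) {c : V} (hc : c ∈ S) (hc' : c ∉ ({u, v, w} : Set V))
    (hadj : ∀ x ∈ S, x ∉ ({u, v, w} : Set V) → x = c ∨ G.Adj c x) :
    IsFullTriangle S D u v w ∨ IsEmptyTriangle S D u v w := by
  have hside : ∀ x ∈ S, x ∉ ({u, v, w} : Set V) →
      (D x ∈ openTriangle (D u) (D v) (D w) ↔ D c ∈ openTriangle (D u) (D v) (D w)) := by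
    intro x hx hx'
    rcases hadj x hx hx' with rfl | h
    · rfl
    · exact (hP.mem_openTriangle_iff_of_adj ht h hc hx hc' hx').symm
  by_cases hcin : D c ∈ openTriangle (D u) (D v) (D w)
  · exact Or.inl fun x hx hx' => (hside x hx hx').mpr hcin
  · exact Or.inr fun x hx hx' => mt (hside x hx hx').mp hcin

lemma disjoint_segment_openTriangle (hP : IsPlanarSLFrame G S D) (ht : IsTriangleIn G S u v w)
    (hE : IsEmptyTriangle S D u v w) (hxy : G.Adj x y) (hx : x ∈ S) (hy : y ∈ S) :
    Disjoint (segment ℝ (D x) (D y)) (openTriangle (D u) (D v) (D w)) := by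
  by_cases hxy' : x ∈ ({u, v, w} : Set V) ∧ y ∈ ({u, v, w} : Set V)
  · exact disjoint_segment_openTriangle_of_mem (apply_mem_of_mem_triple hxy'.1)
      (apply_mem_of_mem_triple hxy'.2)
  have hne : ∀ {c d : V}, c ∈ ({u, v, w} : Set V) → d ∈ ({u, v, w} : Set V) →
      ¬((x = c ∧ y = d) ∨ (x = d ∧ y = c)) := by
    rintro c d hc hd (⟨rfl, rfl⟩ | ⟨rfl, rfl⟩) <;> exact hxy' ⟨by assumption, by assumption⟩
  rcases subset_openTriangle_or_disjoint_triangle (convex_openSegment _ _).isPreconnected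
    (hP.orient_ne_zero ht)
    (hP.disjoint_openSegment_segment hxy ht.adj₁₂ hx hy ht.mem₁ ht.mem₂ (hne (by simp) (by simp)))
    (hP.disjoint_openSegment_segment hxy ht.adj₂₃ hx hy ht.mem₂ ht.mem₃ (hne (by simp) (by simp)))
    (hP.disjoint_openSegment_segment hxy ht.adj₃₁ hx hy ht.mem₃ ht.mem₁ (hne (by simp) (by simp)))
    with h | h
  · -- the endpoint that is not a vertex of the triangle would lie inside it
    have hcl : segment ℝ (D x) (D y) ⊆ triangle (D u) (D v) (D w) :=
      segment_subset_closure_openSegment.trans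
        ((isClosed_triangle _ _ _).closure_subset_iff.mpr (h.trans openTriangle_subset_triangle))
    exfalso
    rcases not_and_or.mp hxy' with hx' | hy'
    · exact hE x hx hx' ((hP.mem_openTriangle_iff_mem_triangle ht hx hx').mpr
        (hcl (left_mem_segment ℝ _ _)))
    · exact hE y hy hy' ((hP.mem_openTriangle_iff_mem_triangle ht hy hy').mpr
        (hcl (right_mem_segment ℝ _ _)))
  · rw [← insert_endpoints_openSegment]
    exact disjoint_insert_left.mpr ⟨hE.apply_not_mem hx, disjoint_insert_left.mpr
      ⟨hE.apply_not_mem hy, h.mono_right openTriangle_subset_triangle⟩⟩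

lemma disjoint_openTriangle_of_not_mem (hP : IsPlanarSLFrame G S D) {u' v' w' : V}
    (ht : IsTriangleIn G S u v w) (ht' : IsTriangleIn G S u' v' w')
    (hE : IsEmptyTriangle S D u v w) (hE' : IsEmptyTriangle S D u' v' w')
    (hu' : u' ∉ ({u, v, w} : Set V)) :
    Disjoint (openTriangle (D u') (D v') (D w')) (openTriangle (D u) (D v) (D w)) :=
  disjoint_openTriangle_of_not_mem_triangle (hP.orient_ne_zero ht) (hP.orient_ne_zero ht')
    (fun h => hE u' ht'.mem₁ hu' ((hP.mem_openTriangle_iff_mem_triangle ht ht'.mem₁ hu').mpr h))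
    (hP.disjoint_segment_openTriangle ht' hE' ht.adj₁₂ ht.mem₁ ht.mem₂).symm
    (hP.disjoint_segment_openTriangle ht' hE' ht.adj₂₃ ht.mem₂ ht.mem₃).symm
    (hP.disjoint_segment_openTriangle ht' hE' ht.adj₃₁ ht.mem₃ ht.mem₁).symm

lemma disjoint_openTriangle (hP : IsPlanarSLFrame G S D) {u' v' w' : V}
    (ht : IsTriangleIn G S u v w) (ht' : IsTriangleIn G S u' v' w')
    (hE : IsEmptyTriangle S D u v w) (hE' : IsEmptyTriangle S D u' v' w')
    (hne : ¬({u', v', w'} : Set V) ⊆ {u, v, w}) :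
    Disjoint (openTriangle (D u') (D v') (D w')) (openTriangle (D u) (D v) (D w)) := by
  simp only [insert_subset_iff, singleton_subset_iff, not_and_or] at hne
  rcases hne with h | h | h
  · exact hP.disjoint_openTriangle_of_not_mem ht ht' hE hE' h
  · rw [← openTriangle_rotate (D u')]
    exact hP.disjoint_openTriangle_of_not_mem ht ht'.rotate hE hE'.rotate h
  · rw [openTriangle_rotate (D w')]
    exact hP.disjoint_openTriangle_of_not_mem ht ht'.rotate.rotate hE hE'.rotate.rotate h

lemma false_of_isFullTriangle_of_not_mem (hP : IsPlanarSLFrame G S D) {u' v' w' : V}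
    (ht : IsTriangleIn G S u v w) (ht' : IsTriangleIn G S u' v' w')
    (hF : IsFullTriangle S D u v w) (hF' : IsFullTriangle S D u' v' w')
    (hu : u ∉ ({u', v', w'} : Set V)) : False := by
  rcases eq_or_eq_or_eq_of_mem_triangle (hP.orient_ne_zero ht) (hP.orient_ne_zero ht')
    (hF.apply_mem_triangle ht'.mem₁) (hF.apply_mem_triangle ht'.mem₂)
    (hF.apply_mem_triangle ht'.mem₃) (openTriangle_subset_triangle (hF' u ht.mem₁ hu))
    with h | h | h
  · exact hu (by simp [hP.1 ht.mem₁ ht'.mem₁ h])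
  · exact hu (by simp [hP.1 ht.mem₁ ht'.mem₂ h])
  · exact hu (by simp [hP.1 ht.mem₁ ht'.mem₃ h])

lemma false_of_isFullTriangle (hP : IsPlanarSLFrame G S D) {u' v' w' : V}
    (ht : IsTriangleIn G S u v w) (ht' : IsTriangleIn G S u' v' w')
    (hF : IsFullTriangle S D u v w) (hF' : IsFullTriangle S D u' v' w')
    (hne : ¬({u, v, w} : Set V) ⊆ {u', v', w'}) : False := by
  simp only [insert_subset_iff, singleton_subset_iff, not_and_or] at hne
  rcases hne with h | h | h
  · exact hP.false_of_isFullTriangle_of_not_mem ht ht' hF hF' h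
  · exact hP.false_of_isFullTriangle_of_not_mem ht.rotate ht' hF.rotate hF' h
  · exact hP.false_of_isFullTriangle_of_not_mem ht.rotate.rotate ht' hF.rotate.rotate hF' h

end IsPlanarSLFrame

namespace GraphG

open IsPlanarSLFrame

abbrev apex (p : Fin 4 × Fin 2) : GVert := .q p.1 p.2

lemma adj_a_succ (i : Fin 4) : GraphG.Adj (.a i) (.a (i + 1)) :=
  (SimpleGraph.fromRel_adj _ _ _).mpr ⟨by simp, Or.inl rfl⟩

lemma adj_apex_a (p : Fin 4 × Fin 2) (i : Fin 4) : GraphG.Adj (apex p) (.a i) :=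
  (SimpleGraph.fromRel_adj _ _ _).mpr ⟨by simp, Or.inl trivial⟩

lemma adj_apex_b (p : Fin 4 × Fin 2) (i : Fin 4) : GraphG.Adj (apex p) (.b i) :=
  (SimpleGraph.fromRel_adj _ _ _).mpr ⟨by simp, Or.inl trivial⟩

def keyVertices (p₁ p₂ : Fin 4 × Fin 2) : Set GVert := {apex p₁, apex p₂, .b 0} ∪ range .a

lemma keyVertices_comm (p₁ p₂ : Fin 4 × Fin 2) : keyVertices p₁ p₂ = keyVertices p₂ p₁ := by
  simp only [keyVertices, insert_comm]

lemma isTriangleIn_fan (p₁ p₂ : Fin 4 × Fin 2) (i : Fin 4) :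
    IsTriangleIn GraphG (keyVertices p₁ p₂) (apex p₁) (.a i) (.a (i + 1)) :=
  ⟨adj_apex_a p₁ i, adj_a_succ i, (adj_apex_a p₁ (i + 1)).symm, by simp [keyVertices],
    by simp [keyVertices], by simp [keyVertices]⟩

lemma not_subset_fan (p : Fin 4 × Fin 2) {i k : Fin 4} (h : i ≠ k) :
    ¬({apex p, .a i, .a (i + 1)} : Set GVert) ⊆ {apex p, .a k, .a (k + 1)} := by
  have hfin : ∀ i k : Fin 4, i ≠ k → ¬((i = k ∨ i = k + 1) ∧ (i + 1 = k ∨ i + 1 = k + 1)) := by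
    decide
  simpa [insert_subset_iff] using hfin i k h

lemma not_subset_fan_of_ne {p₁ p₂ : Fin 4 × Fin 2} (hp : p₁ ≠ p₂) (i j : Fin 4) :
    ¬({apex p₁, .a i, .a (i + 1)} : Set GVert) ⊆ {apex p₂, .a j, .a (j + 1)} :=
  fun h => hp (by simpa [Prod.ext_iff] using h (mem_insert _ _))

variable {p₁ p₂ : Fin 4 × Fin 2} {D : GVert → ℝ × ℝ}

lemma fan_isFull_or_isEmpty (hP : IsPlanarSLFrame GraphG (keyVertices p₁ p₂) D) (hp : p₁ ≠ p₂)
    (i : Fin 4) :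
    IsFullTriangle (keyVertices p₁ p₂) D (apex p₁) (.a i) (.a (i + 1)) ∨
      IsEmptyTriangle (keyVertices p₁ p₂) D (apex p₁) (.a i) (.a (i + 1)) := by
  refine hP.isFullTriangle_or_isEmptyTriangle (isTriangleIn_fan p₁ p₂ i) (c := apex p₂)
    (by simp [keyVertices]) (by simp [Prod.ext_iff] at hp ⊢; tauto) ?_
  rintro x ((rfl | rfl | rfl) | ⟨k, rfl⟩) hx
  · simp at hx
  · exact Or.inl rfl
  · exact Or.inr (adj_apex_b p₂ 0)
  · exact Or.inr (adj_apex_a p₂ k)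

lemma fan_isEmpty_or_fan_isEmpty (hP : IsPlanarSLFrame GraphG (keyVertices p₁ p₂) D)
    (hp : p₁ ≠ p₂) :
    (∀ i, IsEmptyTriangle (keyVertices p₂ p₁) D (apex p₁) (.a i) (.a (i + 1))) ∨
      ∀ j, IsEmptyTriangle (keyVertices p₁ p₂) D (apex p₂) (.a j) (.a (j + 1)) := by
  have hP' : IsPlanarSLFrame GraphG (keyVertices p₂ p₁) D := keyVertices_comm p₁ p₂ ▸ hP
  by_contra! ⟨⟨i, hi⟩, ⟨j, hj⟩⟩
  rw [← keyVertices_comm] at hi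
  exact hP'.false_of_isFullTriangle (keyVertices_comm p₁ p₂ ▸ isTriangleIn_fan p₁ p₂ i)
    (isTriangleIn_fan p₂ p₁ j)
    (keyVertices_comm p₁ p₂ ▸ (fan_isFull_or_isEmpty hP hp i).resolve_right hi)
    ((fan_isFull_or_isEmpty hP' hp.symm j).resolve_right (keyVertices_comm p₁ p₂ ▸ hj))
    (not_subset_fan_of_ne hp i j)

lemma false_of_mem_unique_openTriangle (x : ℝ × ℝ) (i₀ : Fin 4)
    (hx₀ : x ∈ openTriangle (D (apex p₁)) (D (.a i₀)) (D (.a (i₀ + 1))))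
    (hxT : ∀ k ≠ i₀, x ∉ openTriangle (D (apex p₁)) (D (.a k)) (D (.a (k + 1))))
    (hxU : ∀ j, x ∉ openTriangle (D (apex p₂)) (D (.a j)) (D (.a (j + 1))))
    (hseg : ∀ u v, GraphG.Adj u v → u ∈ keyVertices p₁ p₂ → v ∈ keyVertices p₁ p₂ →
      u ≠ .b 0 → v ≠ .b 0 → x ∉ segment ℝ (D u) (D v)) : False := by
  have hmem : ∀ u ∈ ({apex p₁, apex p₂} ∪ range .a : Set GVert),
      u ∈ keyVertices p₁ p₂ ∧ u ≠ .b 0 := by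
    rintro u ((rfl | rfl) | ⟨i, rfl⟩) <;> simp [keyVertices]
  have hspoke : ∀ p ∈ ({p₁, p₂} : Set _), ∀ i, x ∉ segment ℝ (D (apex p)) (D (.a i)) := by
    rintro p hp i
    obtain ⟨h₁, h₁'⟩ := hmem (apex p) (by rcases hp with rfl | rfl <;> simp)
    obtain ⟨h₂, h₂'⟩ := hmem (.a i) (by simp)
    exact hseg _ _ (adj_apex_a p i) h₁ h₂ h₁' h₂'
  have hpar := sum_indicator_openTriangle_eq_of_common_rim (A := fun i => D (.a i))
    (hspoke p₁ (by simp)) (hspoke p₂ (by simp)) fun i =>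
      hseg _ _ (adj_a_succ i) (hmem _ (by simp)).1 (hmem _ (by simp)).1 (by simp) (by simp)
  rw [Finset.sum_eq_single i₀ (fun k _ hk => indicator_of_notMem (hxT k hk) _) (by simp),
    indicator_of_mem hx₀, Finset.sum_eq_zero fun j _ => indicator_of_notMem (hxU j) _] at hpar
  exact one_ne_zero hpar

theorem false_of_forall_isEmptyTriangle (hP : IsPlanarSLFrame GraphG (keyVertices p₁ p₂) D)
    (hp : p₁ ≠ p₂)
    (hE : ∀ j, IsEmptyTriangle (keyVertices p₁ p₂) D (apex p₂) (.a j) (.a (j + 1))) : False := by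
  have hU : ∀ j, IsTriangleIn GraphG (keyVertices p₁ p₂) (apex p₂) (.a j) (.a (j + 1)) := by
    rw [keyVertices_comm]; exact isTriangleIn_fan p₂ p₁
  by_cases hfull : ∃ i₀, IsFullTriangle (keyVertices p₁ p₂) D (apex p₁) (.a i₀) (.a (i₀ + 1))
  · obtain ⟨i₀, hF⟩ := hfull
    have hb : GVert.b 0 ∈ keyVertices p₁ p₂ := by simp [keyVertices]
    have hb' : ∀ p i, GVert.b 0 ∉ ({apex p, .a i, .a (i + 1)} : Set GVert) := by simp
    refine false_of_mem_unique_openTriangle (D (.b 0)) i₀ (hF _ hb (hb' _ _)) (fun k hk => ?_)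
      (fun j => hE j _ hb (hb' _ _))
      fun u v huv hu hv hub hvb => hP.not_mem_segment huv hu hv hb hub.symm hvb.symm
    rcases fan_isFull_or_isEmpty hP hp k with hFk | hEk
    · exact (hP.false_of_isFullTriangle (isTriangleIn_fan p₁ p₂ i₀) (isTriangleIn_fan p₁ p₂ k)
        hF hFk (not_subset_fan p₁ hk.symm)).elim
    · exact hEk _ hb (hb' _ _)
  · have hT : ∀ k, IsEmptyTriangle (keyVertices p₁ p₂) D (apex p₁) (.a k) (.a (k + 1)) :=
      fun k => (fan_isFull_or_isEmpty hP hp k).resolve_left fun h => hfull ⟨k, h⟩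
    have hx₀ := centroid_mem_openTriangle (hP.orient_ne_zero (isTriangleIn_fan p₁ p₂ 0))
    refine false_of_mem_unique_openTriangle _ 0 hx₀ (fun k hk => ?_) (fun j => ?_)
      fun u v huv hu hv _ _ => (hP.disjoint_segment_openTriangle (isTriangleIn_fan p₁ p₂ 0)
        (hT 0) huv hu hv).notMem_of_mem_right hx₀
    · exact (hP.disjoint_openTriangle (isTriangleIn_fan p₁ p₂ 0) (isTriangleIn_fan p₁ p₂ k)
        (hT 0) (hT k) (not_subset_fan p₁ hk)).notMem_of_mem_right hx₀
    · exact (hP.disjoint_openTriangle (isTriangleIn_fan p₁ p₂ 0) (hU j) (hT 0) (hE j)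
        (not_subset_fan_of_ne hp.symm j 0)).notMem_of_mem_right hx₀

end GraphG

open GraphG IsPlanarSLFrame in
/-- In every planar geometric storyplan of `G`, there is no time
step at which all twelve cycle vertices and two distinct apex vertices are
simultaneously visible. -/
theorem no_two_apexes_with_all_cycles
    (len : ℕ) (s e : GVert → ℕ) (D : GVert → ℝ × ℝ)
    (hSP : IsGeomStoryplan GraphG len s e D) :
    ¬ ∃ (t : ℕ) (p₁ p₂ : Fin 4 × Fin 2), p₁ ≠ p₂ ∧
        CyclesVisible s e t ∧
        Visible s e t (.q p₁.1 p₁.2) ∧ Visible s e t (.q p₂.1 p₂.2) := by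
  rintro ⟨t, p₁, p₂, hp, hcyc, hv₁, hv₂⟩
  obtain ⟨-, hbounds, -, hframe⟩ := hSP
  have hP : IsPlanarSLFrame GraphG (keyVertices p₁ p₂) D :=
    (hframe t ((hbounds _).1.trans (hcyc 0).1.1) ((hcyc 0).1.2.trans (hbounds _).2.2)).mono <| by
      rintro v ((rfl | rfl | rfl) | ⟨i, rfl⟩)
      exacts [hv₁, hv₂, (hcyc 0).2.1, (hcyc i).1]
  rcases fan_isEmpty_or_fan_isEmpty hP hp with hT | hU
  · exact false_of_forall_isEmptyTriangle (keyVertices_comm p₁ p₂ ▸ hP) hp.symm hT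
  · exact false_of_forall_isEmptyTriangle hP hp hU
end

section
/- Let a_1, a_2, a_3, a_4 ∈ ℝ² with a_2 lying in the interior of the convex hull of {a_1, a_3, a_4} (so the quadrilateral a_1 a_2 a_3 a_4 is concave with its reflex corner at a_2). If a point x satisfies x ∉ convexHull{a_1, a_3, a_4} and x lies strictly on the same side of the line through a_1 and a_2 as a_4, then the closed segment from x to a_2 intersects the set [a_3, a_4] ∪ [a_4, a_1], where [p, q] denotes the closed segment between p and q. -/
/-- Twice the signed area of the triangle `p q r`; its sign tells on which side
of the directed line through `p` and `q` the point `r` lies. Two points `x`, `y`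
lie strictly on the same side of the line through `p` and `q` iff
`0 < det2 p q x * det2 p q y`. -/
def det2 (p q r : ℝ × ℝ) : ℝ :=
  (q.1 - p.1) * (r.2 - p.2) - (q.2 - p.2) * (r.1 - p.1)

-- affine behaviour of det2 in the last argument, ternary version
lemma det2_comb (p q r₁ r₂ r₃ : ℝ × ℝ) (c₁ c₂ c₃ : ℝ) (h : c₁ + c₂ + c₃ = 1) :
    det2 p q (c₁ • r₁ + c₂ • r₂ + c₃ • r₃)
      = c₁ * det2 p q r₁ + c₂ * det2 p q r₂ + c₃ * det2 p q r₃ := by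
  have h₁ : c₁ = 1 - c₂ - c₃ := by linarith
  subst h₁
  simp only [det2, Prod.fst_add, Prod.snd_add, Prod.smul_fst, Prod.smul_snd, smul_eq_mul]
  ring

lemma det2_self (p q : ℝ × ℝ) : det2 p q q = 0 := by simp [det2]; ring


/-- Let `a₂` lie in the interior of the convex hull of
`{a₁, a₃, a₄}` (concave quadrilateral `a₁a₂a₃a₄` with reflex corner at `a₂`).
If `x` is outside the convex hull of `{a₁, a₃, a₄}` and lies strictly on the
same side of the line through `a₁` and `a₂` as `a₄`, then the closed segment
from `x` to `a₂` meets `[a₃, a₄] ∪ [a₄, a₁]`. -/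
theorem segment_to_reflex_corner_blocked (a₁ a₂ a₃ a₄ x : ℝ × ℝ)
    (h₂ : a₂ ∈ interior (convexHull ℝ ({a₁, a₃, a₄} : Set (ℝ × ℝ))))
    (hx : x ∉ convexHull ℝ ({a₁, a₃, a₄} : Set (ℝ × ℝ)))
    (hside : 0 < det2 a₁ a₂ x * det2 a₁ a₂ a₄) :
    (segment ℝ x a₂ ∩ (segment ℝ a₃ a₄ ∪ segment ℝ a₄ a₁)).Nonempty := by
  classical
  set S : Set (ℝ × ℝ) := {a₁, a₃, a₄} with hS
  have hrange : Set.range ![a₁, a₃, a₄] = S := by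
    ext z
    simp [hS, Matrix.range_cons, Matrix.range_empty]
    tauto
  -- span is everything
  have htop : affineSpan ℝ S = ⊤ :=
    interior_convexHull_nonempty_iff_affineSpan_eq_top.mp ⟨a₂, h₂⟩
  -- affine independence
  have hind : AffineIndependent ℝ ![a₁, a₃, a₄] := by
    rw [affineIndependent_iff_not_collinear_set]
    intro hcol
    have h1 : Module.finrank ℝ (vectorSpan ℝ S) ≤ 1 := by
      rw [← collinear_iff_finrank_le_one]; exact hcol
    have h2 : vectorSpan ℝ S = ⊤ := by
      rw [← direction_affineSpan, htop, AffineSubspace.direction_top]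
    rw [h2] at h1
    have : Module.finrank ℝ (ℝ × ℝ) = 2 := by simp
    rw [finrank_top] at h1
    omega
  have htot : affineSpan ℝ (Set.range ![a₁, a₃, a₄]) = ⊤ := by rw [hrange]; exact htop
  let b : AffineBasis (Fin 3) ℝ (ℝ × ℝ) := ⟨![a₁, a₃, a₄], hind, htot⟩
  have hb0 : b 0 = a₁ := rfl
  have hb1 : b 1 = a₃ := rfl
  have hb2 : b 2 = a₄ := rfl
  have hbrange : Set.range b = S := hrange
  -- coordinates of a₂ are positive
  have ha₂pos : ∀ i, 0 < b.coord i a₂ := by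
    have := b.interior_convexHull
    rw [hbrange] at this
    rw [this] at h₂
    exact h₂
  -- the hull is the nonneg-coordinate set
  have hhull : convexHull ℝ S = {y | ∀ i, 0 ≤ b.coord i y} := by
    rw [← hbrange]; exact b.convexHull_eq_nonneg_coord
  -- some coordinate of x is negative
  have hxneg : ∃ i, b.coord i x < 0 := by
    by_contra h
    push_neg at h
    exact hx (by rw [hhull]; exact h)
  obtain ⟨i₀, hi₀⟩ := hxneg
  -- the path from x to a₂
  set γ : ℝ → ℝ × ℝ := fun t => (1 - t) • x + t • a₂ with hγ
  have hγcont : Continuous γ := by fun_prop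
  set m : ℝ → ℝ := fun t => min (b.coord 0 (γ t)) (min (b.coord 1 (γ t)) (b.coord 2 (γ t))) with hm
  have hmcont : Continuous m := by
    refine Continuous.min ?_ (Continuous.min ?_ ?_) <;>
      exact (continuous_barycentric_coord b _).comp hγcont
  have hγ0 : γ 0 = x := by simp [hγ]
  have hγ1 : γ 1 = a₂ := by simp [hγ]
  have hm0 : m 0 < 0 := by
    have hi3 : i₀ = 0 ∨ i₀ = 1 ∨ i₀ = 2 := by omega
    have : m 0 ≤ b.coord i₀ (γ 0) := by
      rcases hi3 with rfl | rfl | rfl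
      · exact min_le_left _ _
      · exact le_trans (min_le_right _ _) (min_le_left _ _)
      · exact le_trans (min_le_right _ _) (min_le_right _ _)
    rw [hγ0] at this
    exact lt_of_le_of_lt this hi₀
  have hm1 : 0 < m 1 := by
    rw [hm]; simp only [hγ1]
    exact lt_min (ha₂pos 0) (lt_min (ha₂pos 1) (ha₂pos 2))
  -- IVT
  have h01 : (0:ℝ) ≤ 1 := zero_le_one
  have hiv := intermediate_value_Icc h01 hmcont.continuousOn
  have h0mem : (0:ℝ) ∈ Set.Icc (m 0) (m 1) := ⟨le_of_lt hm0, le_of_lt hm1⟩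
  obtain ⟨t, ht, hmt⟩ := hiv h0mem
  set y := γ t with hy
  have hynn : ∀ i, 0 ≤ b.coord i y := by
    intro i
    have hi3 : i = 0 ∨ i = 1 ∨ i = 2 := by omega
    have : m t ≤ b.coord i y := by
      rcases hi3 with rfl | rfl | rfl
      · exact min_le_left _ _
      · exact le_trans (min_le_right _ _) (min_le_left _ _)
      · exact le_trans (min_le_right _ _) (min_le_right _ _)
    linarith [this, hmt.ge, hmt.le]
  have hyzero : ∃ i, b.coord i y = 0 := by
    by_contra h
    push_neg at h
    have : 0 < m t := lt_min (lt_of_le_of_ne (hynn 0) (Ne.symm (h 0)))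
      (lt_min (lt_of_le_of_ne (hynn 1) (Ne.symm (h 1))) (lt_of_le_of_ne (hynn 2) (Ne.symm (h 2))))
    rw [hmt] at this
    exact lt_irrefl 0 this
  -- y is in the segment from x to a₂
  have hyseg : y ∈ segment ℝ x a₂ :=
    ⟨1 - t, t, by linarith [ht.1, ht.2], ht.1, by linarith, rfl⟩
  -- representation of y
  have hsumy : b.coord 0 y + b.coord 1 y + b.coord 2 y = 1 := by
    have := b.sum_coord_apply_eq_one y
    rwa [Fin.sum_univ_three] at this
  have hyrep : y = b.coord 0 y • a₁ + b.coord 1 y • a₃ + b.coord 2 y • a₄ := by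
    have := b.linear_combination_coord_eq_self y
    rw [Fin.sum_univ_three, hb0, hb1, hb2] at this
    exact this.symm
  have hsuma₂ : b.coord 0 a₂ + b.coord 1 a₂ + b.coord 2 a₂ = 1 := by
    have := b.sum_coord_apply_eq_one a₂
    rwa [Fin.sum_univ_three] at this
  have ha₂rep : a₂ = b.coord 0 a₂ • a₁ + b.coord 1 a₂ • a₃ + b.coord 2 a₂ • a₄ := by
    have := b.linear_combination_coord_eq_self a₂
    rw [Fin.sum_univ_three, hb0, hb1, hb2] at this
    exact this.symm
  obtain ⟨i, hi⟩ := hyzero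
  obtain ⟨c0, c1, c2, h0, h1, h2, hsum, hrep, hlink, hzero⟩ :
      ∃ c0 c1 c2 : ℝ, 0 ≤ c0 ∧ 0 ≤ c1 ∧ 0 ≤ c2 ∧ c0 + c1 + c2 = 1 ∧
        y = c0 • a₁ + c1 • a₃ + c2 • a₄ ∧ c2 = b.coord 2 y ∧ (c0 = 0 ∨ c1 = 0 ∨ c2 = 0) := by
    refine ⟨b.coord 0 y, b.coord 1 y, b.coord 2 y, hynn 0, hynn 1, hynn 2, hsumy, hyrep, rfl, ?_⟩
    have hi3 : i = 0 ∨ i = 1 ∨ i = 2 := by omega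
    rcases hi3 with rfl | rfl | rfl
    · exact Or.inl hi
    · exact Or.inr (Or.inl hi)
    · exact Or.inr (Or.inr hi)
  have hFa₂ : det2 a₁ a₂ a₂ = 0 := det2_self _ _
  have hFa₁ : det2 a₁ a₂ a₁ = 0 := by simp [det2]
  rcases hzero with rfl0 | rfl1 | rfl2
  · -- coord of a₁ vanishes : y ∈ [a₃, a₄]
    refine ⟨y, hyseg, Or.inl ⟨c1, c2, h1, h2, by linarith, ?_⟩⟩
    rw [hrep, rfl0]; simp
  · -- coord of a₃ vanishes : y ∈ [a₄, a₁]
    refine ⟨y, hyseg, Or.inr ⟨c2, c0, h2, h0, by linarith, ?_⟩⟩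
    rw [hrep, rfl1]; simp; abel
  · -- coord of a₄ vanishes : contradiction with the side condition
    exfalso
    have hkey : b.coord 1 a₂ * det2 a₁ a₂ a₃ + b.coord 2 a₂ * det2 a₁ a₂ a₄ = 0 := by
      have h := det2_comb a₁ a₂ a₁ a₃ a₄ (b.coord 0 a₂) (b.coord 1 a₂) (b.coord 2 a₂) hsuma₂
      rw [← ha₂rep, hFa₂, hFa₁] at h
      linarith
    have hFy₁ : det2 a₁ a₂ y = (1 - t) * det2 a₁ a₂ x := by
      have h3 : (1 - t) + t + (0:ℝ) = 1 := by ring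
      have h := det2_comb a₁ a₂ x a₂ a₂ (1 - t) t 0 h3
      rw [hFa₂] at h
      simp only [zero_smul, add_zero, zero_mul, mul_zero] at h
      rw [show y = (1 - t) • x + t • a₂ from rfl, h]
    have hFy₂ : det2 a₁ a₂ y = c1 * det2 a₁ a₂ a₃ := by
      have h := det2_comb a₁ a₂ a₁ a₃ a₄ c0 c1 c2 hsum
      rw [← hrep, hFa₁, rfl2] at h
      linarith
    have hFa₄ne : det2 a₁ a₂ a₄ ≠ 0 := by
      intro h; rw [h, mul_zero] at hside; exact lt_irrefl 0 hside
    have hFa₃Fa₄ : det2 a₁ a₂ a₃ * det2 a₁ a₂ a₄ < 0 := by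
      have hc₁ := ha₂pos 1
      have hc₂ := ha₂pos 2
      have h4sq : 0 < det2 a₁ a₂ a₄ * det2 a₁ a₂ a₄ := mul_self_pos.mpr hFa₄ne
      have hmul : b.coord 1 a₂ * (det2 a₁ a₂ a₃ * det2 a₁ a₂ a₄)
          = -(b.coord 2 a₂ * (det2 a₁ a₂ a₄ * det2 a₁ a₂ a₄)) := by
        linear_combination det2 a₁ a₂ a₄ * hkey
      nlinarith [mul_pos hc₂ h4sq, hc₁, hmul]
    have ht1 : ¬ t < 1 := by
      intro hlt
      have hp1 : 0 < (1 - t) * (det2 a₁ a₂ x * det2 a₁ a₂ a₄) :=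
        mul_pos (by linarith) hside
      have hp2 : c1 * (det2 a₁ a₂ a₃ * det2 a₁ a₂ a₄) ≤ 0 :=
        mul_nonpos_of_nonneg_of_nonpos h1 (le_of_lt hFa₃Fa₄)
      have heq : (1 - t) * (det2 a₁ a₂ x * det2 a₁ a₂ a₄)
          = c1 * (det2 a₁ a₂ a₃ * det2 a₁ a₂ a₄) := by
        rw [← mul_assoc, ← mul_assoc, ← hFy₁, hFy₂]
      linarith [heq ▸ hp1]
    have hteq : t = 1 := le_antisymm ht.2 (not_lt.mp ht1)
    have hya : y = a₂ := by rw [hy, hteq, hγ1]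
    rw [hya] at hlink
    rw [rfl2] at hlink
    exact absurd hlink.symm (ne_of_gt (ha₂pos 2))
end
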